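/- Anisotropic Sobolev embedding: for the domain $\Omega = \mathbb{T}\times(0,1) \subset \mathbb{R}^2$, every $g$ with $\nabla g \in H^1_{tan}$ and $g \in H^2_{tan}$ satisfies $\|g\|_{L^\infty(\Omega)}^2 \lesssim \|\nabla g\|_{H^1_{tan}}^2 + \|g\|_{H^2_{tan}}^2$, where $\|u\|_{H^m_{tan}}^2 := \sum_{\ell \leq m}\|\partial_1^\ell u\|_{L^2(\Omega)}^2$ involves only tangential (horizontal) derivatives. -/

import Mathlib

open MeasureTheory
open scoped BigOperators

/-- tangential (horizontal) partial derivative on `ℝ²` -/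
noncomputable def pd1 (f : ℝ × ℝ → ℝ) : ℝ × ℝ → ℝ := fun x => fderiv ℝ f x ((1 : ℝ), (0 : ℝ))

/-- normal (vertical) partial derivative on `ℝ²` -/
noncomputable def pd2 (f : ℝ × ℝ → ℝ) : ℝ × ℝ → ℝ := fun x => fderiv ℝ f x ((0 : ℝ), (1 : ℝ))

/-- a fundamental domain for `Ω = 𝕋 × (0,1)` -/
def Qdom : Set (ℝ × ℝ) := Set.Ioo (0 : ℝ) 1 ×ˢ Set.Ioo (0 : ℝ) 1

lemma contDiff_pdv (f : ℝ × ℝ → ℝ) (hf : ContDiff ℝ (⊤ : ℕ∞) f) (v : ℝ × ℝ) :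
    ContDiff ℝ (⊤ : ℕ∞) (fun x => fderiv ℝ f x v) :=
  (hf.fderiv_right (mod_cast le_top)).clm_apply contDiff_const

lemma hasDerivAt_slice1 (f : ℝ × ℝ → ℝ) (hf : Differentiable ℝ f) (u t : ℝ) :
    HasDerivAt (fun s => f (s, t)) (pd1 f (u, t)) u := by
  have h1 : HasDerivAt (fun s : ℝ => ((s : ℝ), t)) (((1 : ℝ), (0 : ℝ))) u :=
    (hasDerivAt_id u).prodMk (hasDerivAt_const u t)
  exact (hf (u, t)).hasFDerivAt.comp_hasDerivAt u h1

lemma hasDerivAt_slice2 (f : ℝ × ℝ → ℝ) (hf : Differentiable ℝ f) (a t : ℝ) :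
    HasDerivAt (fun s => f (a, s)) (pd2 f (a, t)) t := by
  have h1 : HasDerivAt (fun s : ℝ => (a, (s : ℝ))) (((0 : ℝ), (1 : ℝ))) t :=
    (hasDerivAt_const t a).prodMk (hasDerivAt_id t)
  exact (hf (a, t)).hasFDerivAt.comp_hasDerivAt t h1

lemma integrableOnI (f : ℝ → ℝ) (hf : Continuous f) : IntegrableOn f (Set.Ioo (0:ℝ) 1) :=
  (hf.integrableOn_Icc).mono_set Set.Ioo_subset_Icc_self

lemma integrableOnQ (f : ℝ × ℝ → ℝ) (hf : Continuous f) :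
    IntegrableOn f (Set.Ioo (0:ℝ) 1 ×ˢ Set.Ioo (0:ℝ) 1) := by
  refine (hf.integrableOn_Icc (a := ((0:ℝ),(0:ℝ))) (b := ((1:ℝ),(1:ℝ)))).mono_set ?_
  rw [Set.Icc_prod_eq]
  exact Set.prod_mono Set.Ioo_subset_Icc_self Set.Ioo_subset_Icc_self

lemma abs2mul (x y : ℝ) : |2 * x * y| ≤ x ^ 2 + y ^ 2 := by
  rcases abs_cases (2 * x * y) with ⟨h, _⟩ | ⟨h, _⟩ <;>
    nlinarith [sq_nonneg (x - y), sq_nonneg (x + y)]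

lemma oneD (f f' : ℝ → ℝ) (hd : ∀ x, HasDerivAt f (f' x) x)
    (hc : Continuous f) (hc' : Continuous f') {a : ℝ} (ha : a ∈ Set.Icc (0:ℝ) 1) :
    f a ≤ ∫ t in Set.Ioo (0:ℝ) 1, (|f t| + |f' t|) := by
  have hif : IntegrableOn f (Set.Ioo (0:ℝ) 1) := integrableOnI f hc
  have hiaf : IntegrableOn (fun t => |f t|) (Set.Ioo (0:ℝ) 1) := integrableOnI _ hc.abs
  have hiaf' : IntegrableOn (fun t => |f' t|) (Set.Ioo (0:ℝ) 1) := integrableOnI _ hc'.abs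
  have hiaf'Icc : IntegrableOn (fun t => |f' t|) (Set.Icc (0:ℝ) 1) := hc'.abs.integrableOn_Icc
  have key : ∀ t ∈ Set.Icc (0:ℝ) 1, f a - f t ≤ ∫ s in Set.Ioo (0:ℝ) 1, |f' s| := by
    intro t ht
    have h1 : ∫ s in t..a, f' s = f a - f t :=
      intervalIntegral.integral_eq_sub_of_hasDerivAt (fun x _ => hd x)
        (hc'.intervalIntegrable t a)
    rw [← h1]
    have hsub : Set.uIoc t a ⊆ Set.Icc (0:ℝ) 1 := by
      intro s hs
      rw [Set.mem_uIoc] at hs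
      rcases hs with ⟨h2, h3⟩ | ⟨h2, h3⟩ <;>
        exact ⟨by rcases ha with ⟨ha0, ha1⟩; rcases ht with ⟨ht0, ht1⟩; linarith,
          by rcases ha with ⟨ha0, ha1⟩; rcases ht with ⟨ht0, ht1⟩; linarith⟩
    calc ∫ s in t..a, f' s ≤ |∫ s in t..a, f' s| := le_abs_self _
      _ ≤ ∫ s in Set.uIoc t a, |f' s| := by
          simpa [Real.norm_eq_abs] using
            intervalIntegral.norm_integral_le_integral_norm_uIoc (f := f') (a := t) (b := a)
      _ ≤ ∫ s in Set.Icc (0:ℝ) 1, |f' s| := by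
          refine setIntegral_mono_set hiaf'Icc ?_ (HasSubset.Subset.eventuallyLE hsub)
          exact Filter.Eventually.of_forall fun s => abs_nonneg _
      _ = ∫ s in Set.Ioo (0:ℝ) 1, |f' s| := by
          rw [integral_Icc_eq_integral_Ioc, integral_Ioc_eq_integral_Ioo]
  have hvol : (volume (Set.Ioo (0:ℝ) 1)).toReal = 1 := by simp
  have hconst : ∫ (_ : ℝ) in Set.Ioo (0:ℝ) 1, (∫ s in Set.Ioo (0:ℝ) 1, |f' s|)
      = ∫ s in Set.Ioo (0:ℝ) 1, |f' s| := by
    rw [setIntegral_const, measureReal_def, hvol, one_smul]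
  have hsplit : ∫ t in Set.Ioo (0:ℝ) 1, (|f t| + |f' t|)
      = (∫ t in Set.Ioo (0:ℝ) 1, |f t|) + ∫ t in Set.Ioo (0:ℝ) 1, |f' t| :=
    integral_add hiaf hiaf'
  have hfa : f a = (∫ t in Set.Ioo (0:ℝ) 1, f t) + ∫ t in Set.Ioo (0:ℝ) 1, (f a - f t) := by
    rw [integral_sub (μ := volume.restrict (Set.Ioo (0:ℝ) 1)) (show IntegrableOn (fun _ : ℝ => f a) (Set.Ioo (0:ℝ) 1) volume from integrableOn_const (by simp) (by simp)) hif, setIntegral_const, measureReal_def, hvol,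
      one_smul]
    ring
  have h2 : ∫ t in Set.Ioo (0:ℝ) 1, (f a - f t)
      ≤ ∫ (_ : ℝ) in Set.Ioo (0:ℝ) 1, (∫ s in Set.Ioo (0:ℝ) 1, |f' s|) := by
    refine setIntegral_mono_on
      ((integrableOn_const (by simp) (by simp)).sub hif)
      (integrableOn_const (by simp) (by simp)) measurableSet_Ioo ?_
    exact fun t ht => key t (Set.Ioo_subset_Icc_self ht)
  have h3 : (∫ t in Set.Ioo (0:ℝ) 1, f t) ≤ ∫ t in Set.Ioo (0:ℝ) 1, |f t| :=
    integral_mono hif hiaf fun t => le_abs_self _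
  rw [hsplit]
  rw [hconst] at h2
  linarith

lemma oneD_abs (f f' : ℝ → ℝ) (hd : ∀ x, HasDerivAt f (f' x) x)
    (hc : Continuous f) (hc' : Continuous f') {a : ℝ} (ha : a ∈ Set.Icc (0:ℝ) 1) :
    |f a| ≤ ∫ t in Set.Ioo (0:ℝ) 1, (|f t| + |f' t|) := by
  have h1 := oneD f f' hd hc hc' ha
  have h2 := oneD (fun x => -f x) (fun x => -f' x) (fun x => (hd x).neg) hc.neg hc'.neg ha
  simp only [abs_neg] at h2
  exact abs_le.mpr ⟨by linarith, h1⟩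

/-- the pointwise dominating integrand -/
noncomputable def Hfun (g : ℝ × ℝ → ℝ) : ℝ × ℝ → ℝ := fun p =>
  (|g p ^ 2| + |2 * g p * pd1 g p|) +
    (|2 * g p * pd2 g p| + |2 * pd1 g p * pd2 g p + 2 * g p * pd1 (pd2 g) p|)

lemma keylem (g : ℝ × ℝ → ℝ) (hg : ContDiff ℝ (⊤ : ℕ∞) g) {a b : ℝ}
    (ha : a ∈ Set.Icc (0:ℝ) 1) (hb : b ∈ Set.Icc (0:ℝ) 1) :
    g (a, b) ^ 2 ≤ ∫ q in Qdom, Hfun g q := by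
  have hgd : Differentiable ℝ g := hg.differentiable (by simp)
  have hcg : Continuous g := hg.continuous
  have hc1 : Continuous (pd1 g) := (contDiff_pdv g hg _).continuous
  have hc2 : Continuous (pd2 g) := (contDiff_pdv g hg _).continuous
  have hd2 : Differentiable ℝ (pd2 g) := (contDiff_pdv g hg ((0:ℝ),(1:ℝ))).differentiable (by simp)
  have hc12 : Continuous (pd1 (pd2 g)) := (contDiff_pdv (pd2 g) (contDiff_pdv g hg _) _).continuous
  have hcH : Continuous (Hfun g) := by
    unfold Hfun
    fun_prop
  -- slice continuity helpers
  have hsc1 : ∀ (f : ℝ × ℝ → ℝ), Continuous f → ∀ t : ℝ, Continuous fun u => f (u, t) :=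
    fun f hf t => hf.comp (continuous_id.prodMk continuous_const)
  have hsc2 : ∀ (f : ℝ × ℝ → ℝ), Continuous f → ∀ a : ℝ, Continuous fun s => f (a, s) :=
    fun f hf a => hf.comp (continuous_const.prodMk continuous_id)
  -- Step A : vertical 1D embedding
  have stepA : g (a, b) ^ 2 ≤
      ∫ t in Set.Ioo (0:ℝ) 1, (|g (a, t) ^ 2| + |2 * g (a, t) * pd2 g (a, t)|) := by
    have hd : ∀ s, HasDerivAt (fun s => g (a, s) ^ 2) (2 * g (a, s) * pd2 g (a, s)) s := by
      intro s
      simpa [pow_one] using (hasDerivAt_slice2 g hgd a s).fun_pow 2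
    have := oneD (fun s => g (a, s) ^ 2) (fun s => 2 * g (a, s) * pd2 g (a, s)) hd
      (by fun_prop) (by fun_prop) hb
    calc g (a, b) ^ 2 ≤ |g (a, b) ^ 2| := le_abs_self _
      _ ≤ _ := by
          rw [abs_of_nonneg (sq_nonneg _)]
          exact this
  -- Step B : horizontal 1D embedding, pointwise in t
  have stepB : ∀ t : ℝ, (|g (a, t) ^ 2| + |2 * g (a, t) * pd2 g (a, t)|)
      ≤ ∫ u in Set.Ioo (0:ℝ) 1, Hfun g (u, t) := by
    intro t
    have hB1 : |g (a, t) ^ 2| ≤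
        ∫ u in Set.Ioo (0:ℝ) 1, (|g (u, t) ^ 2| + |2 * g (u, t) * pd1 g (u, t)|) := by
      have hd : ∀ u, HasDerivAt (fun u => g (u, t) ^ 2) (2 * g (u, t) * pd1 g (u, t)) u := by
        intro u
        simpa [pow_one] using (hasDerivAt_slice1 g hgd u t).fun_pow 2
      exact oneD_abs _ _ hd (by fun_prop) (by fun_prop) ha
    have hB2 : |2 * g (a, t) * pd2 g (a, t)| ≤ ∫ u in Set.Ioo (0:ℝ) 1,
        (|2 * g (u, t) * pd2 g (u, t)| +
          |2 * pd1 g (u, t) * pd2 g (u, t) + 2 * g (u, t) * pd1 (pd2 g) (u, t)|) := by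
      have hd : ∀ u, HasDerivAt (fun u => 2 * g (u, t) * pd2 g (u, t))
          (2 * pd1 g (u, t) * pd2 g (u, t) + 2 * g (u, t) * pd1 (pd2 g) (u, t)) u := by
        intro u
        exact ((hasDerivAt_slice1 g hgd u t).const_mul 2).mul
          (hasDerivAt_slice1 (pd2 g) hd2 u t)
      exact oneD_abs _ _ hd (by fun_prop) (by fun_prop) ha
    have hsum : (∫ u in Set.Ioo (0:ℝ) 1, (|g (u, t) ^ 2| + |2 * g (u, t) * pd1 g (u, t)|))
        + (∫ u in Set.Ioo (0:ℝ) 1, (|2 * g (u, t) * pd2 g (u, t)| +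
            |2 * pd1 g (u, t) * pd2 g (u, t) + 2 * g (u, t) * pd1 (pd2 g) (u, t)|))
        = ∫ u in Set.Ioo (0:ℝ) 1, Hfun g (u, t) := by
      rw [← integral_add]
      · rfl
      · exact integrableOnI _ (by fun_prop)
      · exact integrableOnI _ (by fun_prop)
    linarith
  -- integrability of Hfun over the square
  have hQ : Integrable (Hfun g)
      ((volume.restrict (Set.Ioo (0:ℝ) 1)).prod (volume.restrict (Set.Ioo (0:ℝ) 1))) := by
    have := integrableOnQ (Hfun g) hcH
    rwa [IntegrableOn, Measure.volume_eq_prod, ← Measure.prod_restrict] at this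
  -- Step C : integrate the pointwise bound
  have stepC : (∫ t in Set.Ioo (0:ℝ) 1, (|g (a, t) ^ 2| + |2 * g (a, t) * pd2 g (a, t)|))
      ≤ ∫ t in Set.Ioo (0:ℝ) 1, ∫ u in Set.Ioo (0:ℝ) 1, Hfun g (u, t) := by
    refine integral_mono ?_ ?_ stepB
    · exact integrableOnI _ (by fun_prop)
    · exact hQ.integral_prod_right
  -- Step D : Fubini
  have stepD : (∫ t in Set.Ioo (0:ℝ) 1, ∫ u in Set.Ioo (0:ℝ) 1, Hfun g (u, t))
      = ∫ q in Qdom, Hfun g q := by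
    have hunc : Integrable (Function.uncurry fun u t => Hfun g (u, t))
        ((volume.restrict (Set.Ioo (0:ℝ) 1)).prod (volume.restrict (Set.Ioo (0:ℝ) 1))) := by
      exact hQ
    calc (∫ t in Set.Ioo (0:ℝ) 1, ∫ u in Set.Ioo (0:ℝ) 1, Hfun g (u, t))
        = ∫ u in Set.Ioo (0:ℝ) 1, ∫ t in Set.Ioo (0:ℝ) 1, Hfun g (u, t) :=
          (integral_integral_swap hunc).symm
      _ = ∫ q, Hfun g q ∂((volume.restrict (Set.Ioo (0:ℝ) 1)).prod
            (volume.restrict (Set.Ioo (0:ℝ) 1))) := (integral_prod _ hQ).symm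
      _ = ∫ q in Qdom, Hfun g q := by
          rw [Measure.prod_restrict, ← Measure.volume_eq_prod]; rfl
  calc g (a, b) ^ 2 ≤ _ := stepA
    _ ≤ _ := stepC
    _ = _ := stepD

/-- squared tangential Sobolev norm `‖u‖²_{H^m_{tan}} = ∑_{ℓ ≤ m} ‖∂₁^ℓ u‖²_{L²(Ω)}` -/
noncomputable def HtanSq (m : ℕ) (f : ℝ × ℝ → ℝ) : ℝ :=
  ∑ ℓ ∈ Finset.range (m + 1), ∫ x in Qdom, (pd1^[ℓ] f x) ^ 2

/-- Anisotropic Sobolev embedding on `Ω = 𝕋 × (0,1)`: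
`‖g‖²_{L^∞(Ω)} ≲ ‖∇g‖²_{H¹_{tan}} + ‖g‖²_{H²_{tan}}`, where the tangential norms involve only
horizontal derivatives. -/
theorem anisotropic_sobolev_embedding :
    ∃ C > 0, ∀ g : ℝ × ℝ → ℝ, ContDiff ℝ (⊤ : ℕ∞) g →
      (∀ x : ℝ × ℝ, g (x.1 + 1, x.2) = g x) →
      ∀ x : ℝ × ℝ, x.2 ∈ Set.Ioo (0 : ℝ) 1 →
        g x ^ 2 ≤ C * ((HtanSq 1 (pd1 g) + HtanSq 1 (pd2 g)) + HtanSq 2 g) := by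
  refine ⟨4, by norm_num, ?_⟩
  intro g hg hper x hx
  obtain ⟨a, b⟩ := x
  simp only at hx
  have hcg : Continuous g := hg.continuous
  have hc1 : Continuous (pd1 g) := (contDiff_pdv g hg _).continuous
  have hc2 : Continuous (pd2 g) := (contDiff_pdv g hg _).continuous
  have hc12 : Continuous (pd1 (pd2 g)) := (contDiff_pdv (pd2 g) (contDiff_pdv g hg _) _).continuous
  -- periodic reduction
  have hp : Function.Periodic (fun u => g (u, b)) 1 := fun u => hper (u, b)
  have hfr : g (Int.fract a, b) = g (a, b) := by
    have h1 : g (a - (⌊a⌋ : ℝ) * 1, b) = g (a, b) := hp.sub_int_mul_eq ⌊a⌋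
    rw [mul_one] at h1
    rw [Int.fract]
    exact h1
  have ha : Int.fract a ∈ Set.Icc (0:ℝ) 1 := ⟨Int.fract_nonneg a, (Int.fract_lt_one a).le⟩
  have hb : b ∈ Set.Icc (0:ℝ) 1 := ⟨hx.1.le, hx.2.le⟩
  have hkey : g (a, b) ^ 2 ≤ ∫ q in Qdom, Hfun g q := by
    rw [← hfr]; exact keylem g hg ha hb
  -- pointwise bound of Hfun by squares
  have hHS : ∀ q : ℝ × ℝ, Hfun g q ≤
      4 * g q ^ 2 + (2 * pd1 g q ^ 2 + (2 * pd2 g q ^ 2 + pd1 (pd2 g) q ^ 2)) := by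
    intro q
    have e0 : |g q ^ 2| = g q ^ 2 := abs_of_nonneg (sq_nonneg _)
    have e1 := abs2mul (g q) (pd1 g q)
    have e2 := abs2mul (g q) (pd2 g q)
    have e3 : |2 * pd1 g q * pd2 g q + 2 * g q * pd1 (pd2 g) q|
        ≤ (pd1 g q ^ 2 + pd2 g q ^ 2) + (g q ^ 2 + pd1 (pd2 g) q ^ 2) :=
      (abs_add_le _ _).trans (add_le_add (abs2mul _ _) (abs2mul _ _))
    unfold Hfun
    linarith
  -- integrability
  have iH : IntegrableOn (Hfun g) Qdom := integrableOnQ _ (by unfold Hfun; fun_prop)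
  have i0 : IntegrableOn (fun q => g q ^ 2) Qdom := integrableOnQ _ (by fun_prop)
  have i1 : IntegrableOn (fun q => pd1 g q ^ 2) Qdom := integrableOnQ _ (by fun_prop)
  have i2 : IntegrableOn (fun q => pd2 g q ^ 2) Qdom := integrableOnQ _ (by fun_prop)
  have i12 : IntegrableOn (fun q => pd1 (pd2 g) q ^ 2) Qdom := integrableOnQ _ (by fun_prop)
  have j1 : IntegrableOn (fun q => 2 * pd2 g q ^ 2 + pd1 (pd2 g) q ^ 2) Qdom :=
    (i2.const_mul 2).add i12
  have j2 : IntegrableOn (fun q => 2 * pd1 g q ^ 2 + (2 * pd2 g q ^ 2 + pd1 (pd2 g) q ^ 2))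
      Qdom := (i1.const_mul 2).add j1
  have hmono : (∫ q in Qdom, Hfun g q) ≤ ∫ q in Qdom,
      (4 * g q ^ 2 + (2 * pd1 g q ^ 2 + (2 * pd2 g q ^ 2 + pd1 (pd2 g) q ^ 2))) := by
    exact integral_mono iH ((i0.const_mul 4).add j2) hHS
  have hsplit : (∫ q in Qdom,
        (4 * g q ^ 2 + (2 * pd1 g q ^ 2 + (2 * pd2 g q ^ 2 + pd1 (pd2 g) q ^ 2))))
      = 4 * (∫ q in Qdom, g q ^ 2) + (2 * (∫ q in Qdom, pd1 g q ^ 2)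
        + (2 * (∫ q in Qdom, pd2 g q ^ 2) + ∫ q in Qdom, pd1 (pd2 g) q ^ 2)) := by
    rw [integral_add (i0.const_mul 4) j2, integral_add (i1.const_mul 2) j1,
      integral_add (i2.const_mul 2) i12, integral_const_mul, integral_const_mul,
      integral_const_mul]
  -- expand HtanSq
  have e1 : HtanSq 1 (pd1 g) = (∫ q in Qdom, pd1 g q ^ 2) + ∫ q in Qdom, pd1 (pd1 g) q ^ 2 := by
    simp [HtanSq, Finset.sum_range_succ]
  have e2 : HtanSq 1 (pd2 g) = (∫ q in Qdom, pd2 g q ^ 2) + ∫ q in Qdom, pd1 (pd2 g) q ^ 2 := by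
    simp [HtanSq, Finset.sum_range_succ]
  have e3 : HtanSq 2 g = (∫ q in Qdom, g q ^ 2) + ((∫ q in Qdom, pd1 g q ^ 2)
      + ∫ q in Qdom, pd1 (pd1 g) q ^ 2) := by
    simp [HtanSq, Finset.sum_range_succ, Function.iterate_succ_apply', add_assoc]
  -- nonnegativity
  have hQm : MeasurableSet Qdom := measurableSet_Ioo.prod measurableSet_Ioo
  have n0 : 0 ≤ ∫ q in Qdom, g q ^ 2 := setIntegral_nonneg hQm fun q _ => sq_nonneg _
  have n1 : 0 ≤ ∫ q in Qdom, pd1 g q ^ 2 := setIntegral_nonneg hQm fun q _ => sq_nonneg _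
  have n2 : 0 ≤ ∫ q in Qdom, pd2 g q ^ 2 := setIntegral_nonneg hQm fun q _ => sq_nonneg _
  have n12 : 0 ≤ ∫ q in Qdom, pd1 (pd2 g) q ^ 2 := setIntegral_nonneg hQm fun q _ => sq_nonneg _
  have n11 : 0 ≤ ∫ q in Qdom, pd1 (pd1 g) q ^ 2 := setIntegral_nonneg hQm fun q _ => sq_nonneg _
  rw [e1, e2, e3]
  rw [hsplit] at hmono
  linarith
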